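/- (Lemma 4) In the spatial model, for every ε > 0 and γ ≥ 0, the global visibility of node i is sandwiched as exp(−2γε) · μ(Ball(χ_i, ε)) · p_i^{local}(γ) ≤ p_i^{global}(γ) ≤ p_i^{max}(γ), where Ball(χ_i, ε) is the open metric ball of radius ε around χ_i. -/

import Mathlib

open Finset Real MeasureTheory

/-!
On the ball `B(χ i, ε)` the attachment ratio of `i` is at least `exp (-2γε)` times its local
value: moving the point by `d` changes every weight `exp (-γ · dist (χ j) x)` by a factor in
`[exp (-γd), exp (γd)]`, so the ratio changes by a factor of at least `exp (-2γd)`. Integrating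
this lower bound over the ball gives the left inequality; the right one is the bound of an
average by a supremum.
-/

theorem integral_le_ciSup {α : Type*} [MeasurableSpace α] {μ : Measure α}
    [IsProbabilityMeasure μ] {f : α → ℝ} (hfi : Integrable f μ)
    (hf : BddAbove (Set.range f)) :
    ∫ x, f x ∂μ ≤ ⨆ x, f x := by
  simpa using integral_mono hfi (integrable_const _) (le_ciSup hf)

theorem exp_neg_mul_dist_le {A : Type*} [PseudoMetricSpace A] {γ : ℝ} (hγ : 0 ≤ γ)
    (a x y : A) :
    exp (-γ * dist a x) ≤ exp (γ * dist x y) * exp (-γ * dist a y) := by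
  rw [← exp_add, exp_le_exp]
  nlinarith [dist_triangle a x y]

namespace SpatialGrowth

variable {A V : Type*} [PseudoMetricSpace A] [Fintype V]

noncomputable def totalWeight (γ : ℝ) (χ : V → A) (β : V → ℝ) (x : A) : ℝ :=
  ∑ j, exp (-γ * dist (χ j) x) * β j

noncomputable def attachmentRatio (γ : ℝ) (χ : V → A) (β : V → ℝ) (i : V) (x : A) :
    ℝ :=
  exp (-γ * dist (χ i) x) * β i / totalWeight γ χ β x

variable {γ : ℝ} {χ : V → A} {β : V → ℝ}

theorem totalWeight_pos (hβ : ∀ j, 0 < β j) (i : V) (x : A) : 0 < totalWeight γ χ β x :=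
  sum_pos (fun j _ => mul_pos (exp_pos _) (hβ j)) ⟨i, mem_univ i⟩

theorem totalWeight_le (hβ : ∀ j, 0 ≤ β j) (hγ : 0 ≤ γ) (x y : A) :
    totalWeight γ χ β x ≤ exp (γ * dist x y) * totalWeight γ χ β y := by
  rw [totalWeight, totalWeight, mul_sum]
  refine sum_le_sum fun j _ => ?_
  rw [← mul_assoc]
  exact mul_le_mul_of_nonneg_right (exp_neg_mul_dist_le hγ _ _ _) (hβ j)

theorem continuous_totalWeight : Continuous (totalWeight γ χ β) := by
  unfold totalWeight
  fun_prop

theorem attachmentRatio_nonneg (hβ : ∀ j, 0 ≤ β j) (i : V) (x : A) :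
    0 ≤ attachmentRatio γ χ β i x :=
  div_nonneg (mul_nonneg (exp_pos _).le (hβ i))
    (sum_nonneg fun j _ => mul_nonneg (exp_pos _).le (hβ j))

theorem attachmentRatio_le_one (hβ : ∀ j, 0 < β j) (i : V) (x : A) :
    attachmentRatio γ χ β i x ≤ 1 := by
  rw [attachmentRatio, div_le_one (totalWeight_pos hβ i x)]
  exact single_le_sum (f := fun j => exp (-γ * dist (χ j) x) * β j)
    (fun j _ => mul_nonneg (exp_pos _).le (hβ j).le) (mem_univ i)

theorem continuous_attachmentRatio (hβ : ∀ j, 0 < β j) (i : V) :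
    Continuous (attachmentRatio γ χ β i) :=
  (by fun_prop : Continuous fun x => exp (-γ * dist (χ i) x) * β i).div continuous_totalWeight
    fun x => (totalWeight_pos hβ i x).ne'

theorem exp_neg_two_mul_dist_mul_attachmentRatio_le (hβ : ∀ j, 0 < β j) (hγ : 0 ≤ γ) (i : V)
    (x y : A) :
    exp (-(2 * γ * dist x y)) * attachmentRatio γ χ β i y ≤ attachmentRatio γ χ β i x := by
  have hnum : exp (-(γ * dist x y)) * (exp (-γ * dist (χ i) y) * β i)
      ≤ exp (-γ * dist (χ i) x) * β i := by
    rw [← mul_assoc, ← exp_add]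
    refine mul_le_mul_of_nonneg_right ?_ (hβ i).le
    rw [exp_le_exp]
    nlinarith [dist_triangle (χ i) y x, dist_comm x y]
  calc exp (-(2 * γ * dist x y)) * attachmentRatio γ χ β i y
      = exp (-(γ * dist x y)) * (exp (-γ * dist (χ i) y) * β i)
          / (exp (γ * dist x y) * totalWeight γ χ β y) := by
        rw [attachmentRatio, ← div_mul_div_comm, ← exp_sub]
        ring_nf
    _ ≤ attachmentRatio γ χ β i x :=
        div_le_div₀ (mul_nonneg (exp_pos _).le (hβ i).le) hnum (totalWeight_pos hβ i x)
          (totalWeight_le (fun j => (hβ j).le) hγ x y)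

theorem integrable_attachmentRatio [MeasurableSpace A] [OpensMeasurableSpace A]
    (μ : Measure A) [IsFiniteMeasure μ] (hβ : ∀ j, 0 < β j) (i : V) :
    Integrable (attachmentRatio γ χ β i) μ :=
  .of_bound (continuous_attachmentRatio hβ i).aestronglyMeasurable 1 <| .of_forall fun x => by
    rw [norm_of_nonneg (attachmentRatio_nonneg (fun j => (hβ j).le) i x)]
    exact attachmentRatio_le_one hβ i x

end SpatialGrowth

open SpatialGrowth in
theorem spatial_global_visibility_sandwich_general
    {A : Type*} [MetricSpace A] [MeasurableSpace A] [BorelSpace A]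
    (μ : Measure A) [IsProbabilityMeasure μ]
    {V : Type*} [Fintype V]
    (χ : V → A) (β : V → ℝ) (hβ : ∀ j, 0 < β j)
    (γ : ℝ) (hγ : 0 ≤ γ) (i : V) (ε : ℝ) :
    Real.exp (-(2 * γ * ε)) * (μ (Metric.ball (χ i) ε)).toReal *
        (Real.exp (-γ * dist (χ i) (χ i)) * β i
          / ∑ j, Real.exp (-γ * dist (χ j) (χ i)) * β j)
      ≤ (∫ x, Real.exp (-γ * dist (χ i) x) * β i
            / (∑ j, Real.exp (-γ * dist (χ j) x) * β j) ∂μ) ∧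
    (∫ x, Real.exp (-γ * dist (χ i) x) * β i
          / (∑ j, Real.exp (-γ * dist (χ j) x) * β j) ∂μ)
      ≤ ⨆ x : A, Real.exp (-γ * dist (χ i) x) * β i
          / ∑ j, Real.exp (-γ * dist (χ j) x) * β j := by
  change exp (-(2 * γ * ε)) * μ.real (Metric.ball (χ i) ε)
          * attachmentRatio γ χ β i (χ i) ≤ ∫ x, attachmentRatio γ χ β i x ∂μ ∧
      ∫ x, attachmentRatio γ χ β i x ∂μ ≤ ⨆ x, attachmentRatio γ χ β i x
  have hr_nonneg := attachmentRatio_nonneg (γ := γ) (χ := χ) (fun j => (hβ j).le) i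
  have hr_int := integrable_attachmentRatio (γ := γ) (χ := χ) μ hβ i
  set r := attachmentRatio γ χ β i
  have h_ball : ∀ x ∈ Metric.ball (χ i) ε, exp (-(2 * γ * ε)) * r (χ i) ≤ r x :=
    fun x hx =>
    calc exp (-(2 * γ * ε)) * r (χ i)
          ≤ exp (-(2 * γ * dist x (χ i))) * r (χ i) := by gcongr; exacts [hr_nonneg _, hx.le]
        _ ≤ r x := exp_neg_two_mul_dist_mul_attachmentRatio_le hβ hγ i x (χ i)
  constructor
  · calc exp (-(2 * γ * ε)) * μ.real (Metric.ball (χ i) ε) * r (χ i)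
        = exp (-(2 * γ * ε)) * r (χ i) * μ.real (Metric.ball (χ i) ε) := mul_right_comm _ _ _
      _ ≤ ∫ x in Metric.ball (χ i) ε, r x ∂μ :=
          setIntegral_ge_of_const_le_real Metric.isOpen_ball.measurableSet
            (measure_ne_top _ _) h_ball hr_int.integrableOn
      _ ≤ ∫ x, r x ∂μ := setIntegral_le_integral hr_int (.of_forall hr_nonneg)
  · exact integral_le_ciSup hr_int ⟨1, Set.forall_mem_range.2 (attachmentRatio_le_one hβ i)⟩

/-- Lemma 4: in the spatial model, for every `ε > 0` and `γ ≥ 0`, the global visibility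
of node `i` satisfies
`exp (-2γε) · μ(Ball(χ i, ε)) · p_i^{local}(γ) ≤ p_i^{global}(γ) ≤ p_i^{max}(γ)`. -/
theorem spatial_global_visibility_sandwich
    {A : Type*} [MetricSpace A] [Nonempty A] [MeasurableSpace A] [BorelSpace A]
    (μ : Measure A) [IsProbabilityMeasure μ]
    {V : Type*} [Fintype V] [Nonempty V]
    (χ : V → A) (β : V → ℝ) (hβ : ∀ j, 0 < β j)
    (γ : ℝ) (hγ : 0 ≤ γ) (i : V) (ε : ℝ) (hε : 0 < ε) :
    Real.exp (-(2 * γ * ε)) * (μ (Metric.ball (χ i) ε)).toReal *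
        (Real.exp (-γ * dist (χ i) (χ i)) * β i
          / ∑ j, Real.exp (-γ * dist (χ j) (χ i)) * β j)
      ≤ (∫ x, Real.exp (-γ * dist (χ i) x) * β i
            / (∑ j, Real.exp (-γ * dist (χ j) x) * β j) ∂μ) ∧
    (∫ x, Real.exp (-γ * dist (χ i) x) * β i
          / (∑ j, Real.exp (-γ * dist (χ j) x) * β j) ∂μ)
      ≤ ⨆ x : A, Real.exp (-γ * dist (χ i) x) * β i
          / ∑ j, Real.exp (-γ * dist (χ j) x) * β j :=
  spatial_global_visibility_sandwich_general μ χ β hβ γ hγ i ε
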